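/- In $N_r$ with $4\le r\le 7$, the elements $\alpha \in K_r^\perp$ with $(\alpha,\alpha) = -2$ form a root system of rank $r$ in $K_r^\perp \otimes \mathbb{R}$ (with the negative of the given form as positive definite scalar product); in particular, the elements $\beta_1=-\ell_1+\ell_2,\ldots,\beta_{r-1}=-\ell_{r-1}+\ell_r$, $\beta_r=-\ell_0+\ell_1+\ell_2+\ell_3$ all lie in $K_r^\perp$ and satisfy $(\beta_i,\beta_i)=-2$. -/

import Mathlib

/-!
Writing `a = (a₀, a')` with `a' ∈ ℤ^r`, the conditions `(a, K) = 0` and `(a, a) = -2` say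
`∑ a'ᵢ = -3 a₀` and `∑ a'ᵢ² = a₀² + 2`, so Cauchy–Schwarz gives `9 a₀² ≤ r (a₀² + 2)`; for
`r ≤ 8` this bounds every coordinate, so there are finitely many roots. Because `(a, a) = -2`,
`b + (a, b) a` is the reflection `b - 2 (a, b) / (a, a) • a`, which preserves any symmetric
bilinear form and fixes `K` when `a ⊥ K`. Finally, listing `β_r, β_1, …, β_{r-1}` and dropping
the coordinate of `ℓ_r` gives an upper triangular matrix with diagonal `-1`, whence linear
independence.
-/

def Nform (r : ℕ) (x y : Fin (r + 1) → ℤ) : ℤ :=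
  ∑ i : Fin (r + 1), if i = 0 then x i * y i else -(x i * y i)

def Kvec (r : ℕ) : Fin (r + 1) → ℤ := fun i => if i = 0 then -3 else 1

/-- The simple roots `β_1 = -ℓ_1+ℓ_2, …, β_{r-1} = -ℓ_{r-1}+ℓ_r`,
`β_r = -ℓ_0+ℓ_1+ℓ_2+ℓ_3` (indexed by `j : Fin r`, with `β_{j+1} = beta r j`). -/
def beta (r : ℕ) (j : Fin r) : Fin (r + 1) → ℤ := fun i =>
  if (j : ℕ) + 1 < r then
    (if (i : ℕ) = (j : ℕ) + 1 then -1 else if (i : ℕ) = (j : ℕ) + 2 then 1 else 0)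
  else
    (if (i : ℕ) = 0 then -1 else if (i : ℕ) ≤ 3 then 1 else 0)

/-- The set of roots: `α ∈ K_r^⊥` with `(α,α) = -2`. -/
def RootSet (r : ℕ) : Set (Fin (r + 1) → ℤ) :=
  {a | Nform r a (Kvec r) = 0 ∧ Nform r a a = -2}

namespace LinearMap.BilinForm

variable {R M : Type*} [CommRing R] [AddCommGroup M] [Module R M] {B : LinearMap.BilinForm R M}

lemma apply_add_smul_left_of_apply_eq_zero {a k : M} (h : B a k = 0) (b : M) (t : R) :
    B (b + t • a) k = B b k := by
  simp [h]

lemma IsSymm.apply_add_smul_self_of_apply_self_eq_neg_two (hB : B.IsSymm) {a : M}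
    (ha : B a a = -2) (b : M) : B (b + B a b • a) (b + B a b • a) = B b b := by
  simp only [map_add, map_smul, LinearMap.add_apply, LinearMap.smul_apply, smul_eq_mul, ha,
    hB.eq b a]
  ring

end LinearMap.BilinForm

def nformBilin (r : ℕ) : LinearMap.BilinForm ℤ (Fin (r + 1) → ℤ) :=
  Matrix.toLinearMap₂' ℤ (Matrix.diagonal fun i => if i = 0 then 1 else -1)

@[simp] lemma nformBilin_apply (r : ℕ) (x y : Fin (r + 1) → ℤ) :
    nformBilin r x y = Nform r x y := by
  simp only [nformBilin, Matrix.toLinearMap₂'_apply', Matrix.mulVec_diagonal, dotProduct, Nform]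
  refine Finset.sum_congr rfl fun i _ => ?_
  split_ifs <;> ring

lemma nformBilin_isSymm (r : ℕ) : (nformBilin r).IsSymm :=
  ⟨fun x y => by simp only [nformBilin_apply, Nform, mul_comm (x _)]⟩

lemma Nform_eq_sub_sum (r : ℕ) (x y : Fin (r + 1) → ℤ) :
    Nform r x y = x 0 * y 0 - ∑ i : Fin r, x i.succ * y i.succ := by
  simp [Nform, Fin.sum_univ_succ, Finset.sum_neg_distrib, sub_eq_add_neg]

lemma rootSet_subset_pi_Icc {r : ℕ} (hr : r ≤ 8) :
    RootSet r ⊆ Set.univ.pi fun _ => Set.Icc (-4) 4 := by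
  rintro a ⟨haK, haa⟩ i -
  rw [Nform_eq_sub_sum] at haK haa
  have hsum : ∑ i : Fin r, a i.succ = -3 * a 0 := by
    simp only [Kvec, Fin.succ_ne_zero, if_true, if_false, mul_one] at haK
    linarith
  have hsq : ∑ i : Fin r, a i.succ ^ 2 = a 0 ^ 2 + 2 := by simp only [sq]; linarith
  have hcs := sq_sum_le_card_mul_sum_sq (s := Finset.univ) (f := fun i : Fin r => a i.succ)
  simp only [Finset.card_univ, Fintype.card_fin, hsum, hsq] at hcs
  have h0 : a 0 ^ 2 ≤ 16 := by
    have : (r : ℤ) ≤ 8 := by exact_mod_cast hr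
    nlinarith
  have hi : a i ^ 2 < 5 ^ 2 := by
    cases i using Fin.cases with
    | zero => linarith
    | succ i =>
      have := Finset.single_le_sum (f := fun i : Fin r => a i.succ ^ 2)
        (fun _ _ => sq_nonneg _) (Finset.mem_univ i)
      linarith
  have := abs_lt_of_sq_lt_sq' hi (by norm_num)
  exact ⟨by omega, by omega⟩

lemma rootSet_finite {r : ℕ} (hr : r ≤ 8) : (RootSet r).Finite :=
  (Set.Finite.pi fun _ => Set.finite_Icc _ _).subset (rootSet_subset_pi_Icc hr)

lemma add_Nform_smul_mem_rootSet {r : ℕ} {a b : Fin (r + 1) → ℤ} (ha : a ∈ RootSet r)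
    (hb : b ∈ RootSet r) : b + Nform r a b • a ∈ RootSet r := by
  obtain ⟨haK, haa⟩ := ha
  obtain ⟨hbK, hbb⟩ := hb
  simp only [← nformBilin_apply] at haK haa hbK hbb
  refine ⟨?_, ?_⟩ <;> simp only [← nformBilin_apply]
  · rw [LinearMap.BilinForm.apply_add_smul_left_of_apply_eq_zero haK, hbK]
  · rw [(nformBilin_isSymm r).apply_add_smul_self_of_apply_self_eq_neg_two haa, hbb]

lemma Nform_single_left (r : ℕ) (p : Fin (r + 1)) (y : Fin (r + 1) → ℤ) :
    Nform r (Pi.single p 1) y = if p = 0 then y p else -y p := by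
  rw [Nform, Finset.sum_eq_single p (fun i _ hi => by simp [hi]) (by simp)]
  simp

lemma beta_of_lt {r : ℕ} (j : Fin r) (hj : (j : ℕ) + 1 < r) :
    beta r j = Pi.single ⟨j + 2, by omega⟩ 1 - Pi.single ⟨j + 1, by omega⟩ 1 := by
  ext i
  simp only [beta, if_pos hj, Pi.sub_apply, Pi.single_apply, Fin.ext_iff]
  split_ifs <;> omega

lemma beta_of_not_lt {r : ℕ} (hr : 3 ≤ r) (j : Fin r) (hj : ¬(j : ℕ) + 1 < r) :
    beta r j = Pi.single ⟨1, by omega⟩ 1 + Pi.single ⟨2, by omega⟩ 1 +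
      Pi.single ⟨3, by omega⟩ 1 - Pi.single 0 1 := by
  ext i
  simp only [beta, if_neg hj, Pi.sub_apply, Pi.add_apply, Pi.single_apply, Fin.ext_iff,
    Fin.val_zero]
  split_ifs <;> omega

lemma beta_mem_rootSet {r : ℕ} (hr : 3 ≤ r) (j : Fin r) : beta r j ∈ RootSet r := by
  by_cases hj : (j : ℕ) + 1 < r
  · rw [beta_of_lt j hj]
    refine ⟨?_, ?_⟩ <;> simp only [← nformBilin_apply, map_sub, LinearMap.sub_apply] <;>
      simp [Nform_single_left, Fin.ext_iff, Kvec]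
  · rw [beta_of_not_lt hr j hj]
    refine ⟨?_, ?_⟩ <;>
      simp only [← nformBilin_apply, map_sub, map_add, LinearMap.sub_apply,
        LinearMap.add_apply] <;>
      simp [Nform_single_left, Fin.ext_iff, Kvec]

/-- The rows `β_r, β_1, …, β_{r-1}` (where `r = n + 1`) restricted to `ℓ_0, …, ℓ_{r-1}`. -/
def betaMinor (n : ℕ) : Matrix (Fin (n + 1)) (Fin (n + 1)) ℤ :=
  Matrix.of fun k i => beta (n + 1) ((finRotate (n + 1)).symm k) i.castSucc

lemma betaMinor_finRotate (n : ℕ) (m i : Fin (n + 1)) :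
    betaMinor n (finRotate _ m) i = beta (n + 1) m i.castSucc := by
  simp [betaMinor]

lemma val_finRotate (n : ℕ) (m : Fin (n + 1)) :
    (finRotate (n + 1) m : ℕ) = if (m : ℕ) = n then 0 else (m : ℕ) + 1 := by
  simpa only [Fin.ext_iff, Fin.val_last] using coe_finRotate m

lemma betaMinor_isUpperTriangular (n : ℕ) : (betaMinor n).IsUpperTriangular := by
  intro k i hik
  obtain ⟨m, rfl⟩ := (finRotate (n + 1)).surjective k
  have hk := val_finRotate n m
  simp only [id, Fin.lt_def] at hik
  rw [betaMinor_finRotate, beta]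
  simp only [Fin.val_castSucc]
  split_ifs at hk ⊢ <;> omega

lemma betaMinor_apply_self (n : ℕ) (k : Fin (n + 1)) : betaMinor n k k = -1 := by
  obtain ⟨m, rfl⟩ := (finRotate (n + 1)).surjective k
  have hk := val_finRotate n m
  rw [betaMinor_finRotate, beta]
  simp only [Fin.val_castSucc]
  split_ifs at hk ⊢ <;> omega

lemma linearIndependent_beta (r : ℕ) : LinearIndependent ℤ (beta r) := by
  obtain _ | n := r
  · exact linearIndependent_empty_type
  have hdet : (betaMinor n).det ≠ 0 := by
    rw [Matrix.det_of_isUpperTriangular (betaMinor_isUpperTriangular n)]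
    simp [betaMinor_apply_self]
  have hrows : LinearIndependent ℤ
      (LinearMap.funLeft ℤ ℤ Fin.castSucc ∘ beta (n + 1) ∘ (finRotate (n + 1)).symm) :=
    Matrix.linearIndependent_rows_of_det_ne_zero hdet
  exact (linearIndependent_equiv' _ rfl).mp hrows.of_comp

/-- The elements `α ∈ K_r^⊥` with `(α,α) = -2` form a root system of rank `r`:
the set of roots is finite, stable under the reflections `s_α(b) = b + (α,b)α`
(note `(α,α) = -2`), contains the `β_j`, and the `β_j` are `r` linearly
independent simple roots. -/
theorem roots_form_root_system (r : ℕ) (h4 : 4 ≤ r) (h7 : r ≤ 7) :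
    (RootSet r).Finite ∧
    (∀ a ∈ RootSet r, ∀ b ∈ RootSet r, b + Nform r a b • a ∈ RootSet r) ∧
    (∀ j : Fin r, beta r j ∈ RootSet r ∧
      Nform r (beta r j) (Kvec r) = 0 ∧ Nform r (beta r j) (beta r j) = -2) ∧
    LinearIndependent ℤ (beta r) :=
  ⟨rootSet_finite (by omega), fun _ ha _ hb => add_Nform_smul_mem_rootSet ha hb,
    fun j => ⟨beta_mem_rootSet (by omega) j, beta_mem_rootSet (by omega) j⟩,
    linearIndependent_beta r⟩
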